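/- arXiv:2105.11415 — 5 statements merged into one kernel-verified Lean document; each statement's English description precedes it below -/
import Mathlib

section
/- Let H ∈ ℂ^{Nr×Nt} and G ∈ ℂ^{Ne×Nt}, let P_T > 0, and suppose H†H − G†G is NOT negative semidefinite. If (Q, Z, λ) satisfies the KKT conditions of the secrecy rate maximization problem, then Q is a global maximizer of C_s over the feasible set 𝒬 = { Q ⪰ 0 : tr(Q) ≤ P_T }; i.e., C_s(Q) ≥ C_s(Q') for every Hermitian positive semidefinite Q' with tr(Q') ≤ P_T. -/
open Matrix
open scoped ComplexOrder

/-- The secrecy rate `C_s(Q) = ln det(I + H Q Hᴴ) − ln det(I + G Q Gᴴ)`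
(for positive semidefinite `Q` both determinants are positive reals). -/
noncomputable def secrecyRate {Nr Ne Nt : ℕ}
    (H : Matrix (Fin Nr) (Fin Nt) ℂ) (G : Matrix (Fin Ne) (Fin Nt) ℂ)
    (Q : Matrix (Fin Nt) (Fin Nt) ℂ) : ℝ :=
  Real.log ((1 + H * Q * Hᴴ).det.re) - Real.log ((1 + G * Q * Gᴴ).det.re)

/-- The KKT conditions of the secrecy rate maximization problem
`max { C_s(Q) : Q ⪰ 0, tr Q ≤ P_T }`: stationarity, primal feasibility,
dual feasibility and complementary slackness. -/
def IsKKTPoint {Nr Ne Nt : ℕ}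
    (H : Matrix (Fin Nr) (Fin Nt) ℂ) (G : Matrix (Fin Ne) (Fin Nt) ℂ) (PT : ℝ)
    (Q Z : Matrix (Fin Nt) (Fin Nt) ℂ) (l : ℝ) : Prop :=
  Hᴴ * (1 + H * Q * Hᴴ)⁻¹ * H - Gᴴ * (1 + G * Q * Gᴴ)⁻¹ * G
      - (l : ℂ) • (1 : Matrix (Fin Nt) (Fin Nt) ℂ) + Z = 0 ∧
    (Matrix.trace Q).re ≤ PT ∧
    0 ≤ l ∧
    l * ((Matrix.trace Q).re - PT) = 0 ∧
    Z.PosSemidef ∧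
    Q.PosSemidef ∧
    Q * Z = 0

/-!
Write `A = HᴴH` and `T = GᴴG`, so that `C_s(Q) = log det (1 + A Q) - log det (1 + T Q)`.
At a KKT point `(Q, Z, λ)` the matrix `W = A + Z` is a better legitimate channel that agrees
with `A` at `Q` (because `Z Q = 0`), and stationarity says
`(1 + W Q)⁻¹ W = (1 + T Q)⁻¹ T + λ`.
A resolvent identity turns the latter into `D = W - T ⪰ 0`: the eavesdropper is degraded with
respect to `W`. Then the rate `log det (1 + W Q) - log det (1 + T Q) = log det (1 + D Φ(Q))`,
with `Φ(Q) = Q (1 + T Q)⁻¹`, is concave in `Q`, since `Φ` is operator concave and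
`log det (1 + D Φ)` is concave and increasing in `Φ`. Its gradient at `Q` is `λ`, so by
complementary slackness `Q` maximizes it over `tr Q ≤ P_T`; as it bounds `C_s` from above and
equals `C_s` at `Q`, `Q` maximizes `C_s` as well.
-/

section Resolvent

variable {R : Type*} [Ring R]

theorem sub_mul_mul_eq_of_one_add_mul_mul_eq {A B X P : R} (hP : P * (1 + B * A) = A)
    (hX : (1 + B * A) * X = B) : A - A * X * A = P := by
  have h : A * X * A = A - P := calc
    A * X * A = P * ((1 + B * A) * X) * A := by rw [← mul_assoc P, hP]
    _ = P * (1 + B * A) - P := by rw [hX]; noncomm_ring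
    _ = A - P := by rw [hP]
  rw [h, sub_sub_cancel]

/-- For `F = (1 + X * Y)⁻¹ * X` and `Y ⪰ 0` the middle factor `Y - Y * F' * Y` is `⪰ 0`, so
this says both that `X ↦ F` is operator concave and that `X' - X` dominates a congruence of
`F' - F`. -/
theorem one_add_mul_mul_sub_mul_one_add_mul {X X' Y F F' : R} (hF : (1 + X * Y) * F = X)
    (hF'l : (1 + X' * Y) * F' = X') (hF'r : F' * (1 + Y * X') = X') :
    (1 + X * Y) * (F' - F) * (1 + Y * X) = (X' - X) - (X' - X) * (Y - Y * F' * Y) * (X' - X) := by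
  have e : (1 + X * Y) * (F' - F) * (1 + Y * X)
      = (1 + X' * Y) * F' * (1 + Y * X') - (X' - X) * Y * (F' * (1 + Y * X'))
        - (1 + X' * Y) * F' * Y * (X' - X) + (X' - X) * Y * F' * Y * (X' - X)
        - (1 + X * Y) * F * (1 + Y * X) := by noncomm_ring
  rw [e, hF'l, hF'r, hF]
  noncomm_ring

end Resolvent

theorem Complex.log_re_mul {z w : ℂ} (hz : 0 < z) (hw : 0 < w) :
    Real.log (z * w).re = Real.log z.re + Real.log w.re := by
  obtain ⟨x, rfl⟩ : ∃ x : ℝ, z = x :=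
    ⟨z.re, Complex.eq_re_of_ofReal_le (r := 0) (by simpa using hz.le)⟩
  obtain ⟨y, rfl⟩ : ∃ y : ℝ, w = y :=
    ⟨w.re, Complex.eq_re_of_ofReal_le (r := 0) (by simpa using hw.le)⟩
  rw [← Complex.ofReal_mul, Complex.ofReal_re, Complex.ofReal_re, Complex.ofReal_re,
    Real.log_mul (Complex.zero_lt_real.mp hz).ne' (Complex.zero_lt_real.mp hw).ne']

namespace Matrix

variable {m n : Type*} [Fintype m] [Fintype n] [DecidableEq m] [DecidableEq n]

/-- No invertibility is needed: if `1 + A * B` is singular then so is `1 + B * A`, and both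
inverses are `0`. -/
theorem mul_inv_one_add_mul {α : Type*} [CommRing α] (A : Matrix m n α) (B : Matrix n m α) :
    B * (1 + A * B)⁻¹ = (1 + B * A)⁻¹ * B := by
  by_cases h : IsUnit (1 + A * B).det
  · have h' : IsUnit (1 + B * A).det := det_one_add_mul_comm A B ▸ h
    have e : (1 + B * A) * B = B * (1 + A * B) := by
      rw [Matrix.add_mul, Matrix.mul_add, Matrix.one_mul, Matrix.mul_one, Matrix.mul_assoc]
    calc B * (1 + A * B)⁻¹ = (1 + B * A)⁻¹ * ((1 + B * A) * B) * (1 + A * B)⁻¹ := by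
          rw [nonsing_inv_mul_cancel_left _ _ h']
      _ = (1 + B * A)⁻¹ * B := by
          rw [e, ← Matrix.mul_assoc, mul_nonsing_inv_cancel_right _ _ h]
  · have h' : ¬IsUnit (1 + B * A).det := det_one_add_mul_comm A B ▸ h
    rw [nonsing_inv_apply_not_isUnit _ h, nonsing_inv_apply_not_isUnit _ h', Matrix.mul_zero,
      Matrix.zero_mul]

theorem PosSemidef.exists_eq_conjTranspose_mul_self {A : Matrix n n ℂ} (hA : A.PosSemidef) :
    ∃ B : Matrix n n ℂ, A = Bᴴ * B := by
  open scoped MatrixOrder in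
  exact CStarAlgebra.nonneg_iff_eq_star_mul_self.mp hA.nonneg

theorem PosSemidef.trace_mul_nonneg {A B : Matrix n n ℂ} (hA : A.PosSemidef)
    (hB : B.PosSemidef) : 0 ≤ (A * B).trace := by
  obtain ⟨C, rfl⟩ := hA.exists_eq_conjTranspose_mul_self
  rw [Matrix.mul_assoc, trace_mul_comm]
  exact (hB.mul_mul_conjTranspose_same C).trace_nonneg

theorem det_one_add_mul_pos {A Q : Matrix n n ℂ} (hA : A.PosSemidef) (hQ : Q.PosSemidef) :
    0 < (1 + A * Q).det := by
  obtain ⟨C, rfl⟩ := hQ.exists_eq_conjTranspose_mul_self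
  rw [← Matrix.mul_assoc, det_one_add_mul_comm, ← Matrix.mul_assoc]
  exact (PosDef.one.add_posSemidef (hA.mul_mul_conjTranspose_same C)).det_pos

theorem posSemidef_mul_inv_one_add_mul {A Q : Matrix n n ℂ} (hA : A.PosSemidef)
    (hQ : Q.PosSemidef) : (Q * (1 + A * Q)⁻¹).PosSemidef := by
  obtain ⟨C, rfl⟩ := hQ.exists_eq_conjTranspose_mul_self
  have h := (PosDef.one.add_posSemidef (hA.mul_mul_conjTranspose_same C)).inv.posSemidef
  rw [Matrix.mul_assoc, ← Matrix.mul_assoc A, mul_inv_one_add_mul (A * Cᴴ) C,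
    ← Matrix.mul_assoc, ← Matrix.mul_assoc C A]
  exact h.conjTranspose_mul_mul_same C

theorem posSemidef_sub_mul_mul_of_one_add_mul_mul_eq {X Y F : Matrix n n ℂ}
    (hX : X.PosSemidef) (hY : Y.PosSemidef) (hF : (1 + X * Y) * F = X) :
    (Y - Y * F * Y).PosSemidef := by
  have hu : IsUnit (1 + X * Y).det := isUnit_iff_ne_zero.mpr (det_one_add_mul_pos hX hY).ne'
  rw [sub_mul_mul_eq_of_one_add_mul_mul_eq (nonsing_inv_mul_cancel_right _ _ hu) hF]
  exact posSemidef_mul_inv_one_add_mul hX hY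

theorem one_add_mul_mul_mul_inv_one_add_mul {T Q : Matrix n n ℂ} (hT : T.PosSemidef)
    (hQ : Q.PosSemidef) : (1 + Q * T) * (Q * (1 + T * Q)⁻¹) = Q := by
  have hu : IsUnit (1 + Q * T).det := isUnit_iff_ne_zero.mpr (det_one_add_mul_pos hQ hT).ne'
  rw [mul_inv_one_add_mul, mul_nonsing_inv_cancel_left _ _ hu]

theorem one_add_mul_mul_inv_mul_one_add_mul {T Q : Matrix n n ℂ} (hT : T.PosSemidef)
    (hQ : Q.PosSemidef) (D : Matrix n n ℂ) :
    (1 + D * (Q * (1 + T * Q)⁻¹)) * (1 + T * Q) = 1 + (T + D) * Q := by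
  have hu : IsUnit (1 + T * Q).det := isUnit_iff_ne_zero.mpr (det_one_add_mul_pos hT hQ).ne'
  rw [Matrix.add_mul, Matrix.one_mul, Matrix.mul_assoc D, nonsing_inv_mul_cancel_right _ _ hu]
  noncomm_ring

theorem one_add_mul_mul_conjTranspose_mul_inv_mul {H : Matrix m n ℂ} {Q : Matrix n n ℂ}
    (hQ : Q.PosSemidef) : (1 + Hᴴ * H * Q) * (Hᴴ * (1 + H * Q * Hᴴ)⁻¹ * H) = Hᴴ * H := by
  have hu := (isUnit_iff_isUnit_det _).mp
    (PosDef.one.add_posSemidef (hQ.mul_mul_conjTranspose_same H)).isUnit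
  have e : (1 + Hᴴ * H * Q) * Hᴴ = Hᴴ * (1 + H * Q * Hᴴ) := by
    simp only [Matrix.add_mul, Matrix.mul_add, Matrix.one_mul, Matrix.mul_one, Matrix.mul_assoc]
  rw [← Matrix.mul_assoc, ← Matrix.mul_assoc, e, mul_nonsing_inv_cancel_right _ _ hu]

theorem conjTranspose_mul_inv_mul_mul_one_add_mul {H : Matrix m n ℂ} {Q : Matrix n n ℂ}
    (hQ : Q.PosSemidef) : Hᴴ * (1 + H * Q * Hᴴ)⁻¹ * H * (1 + Q * (Hᴴ * H)) = Hᴴ * H := by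
  have hu := (isUnit_iff_isUnit_det _).mp
    (PosDef.one.add_posSemidef (hQ.mul_mul_conjTranspose_same H)).isUnit
  have e : H * (1 + Q * (Hᴴ * H)) = (1 + H * Q * Hᴴ) * H := by
    simp only [Matrix.add_mul, Matrix.mul_add, Matrix.one_mul, Matrix.mul_one, Matrix.mul_assoc]
  rw [Matrix.mul_assoc, e, ← Matrix.mul_assoc, nonsing_inv_mul_cancel_right _ _ hu]

theorem PosDef.log_re_det_le {M : Matrix n n ℂ} (hM : M.PosDef) :
    Real.log M.det.re ≤ M.trace.re - Fintype.card n := by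
  have hev := hM.eigenvalues_pos
  rw [hM.isHermitian.det_eq_prod_eigenvalues, hM.isHermitian.trace_eq_sum_eigenvalues]
  simp only [← RCLike.ofReal_prod, ← RCLike.ofReal_sum, RCLike.re_to_complex.symm,
    RCLike.ofReal_re]
  rw [Real.log_prod fun i _ => (hev i).ne']
  calc ∑ i, Real.log (hM.isHermitian.eigenvalues i)
      ≤ ∑ i, (hM.isHermitian.eigenvalues i - 1) :=
        Finset.sum_le_sum fun i _ => Real.log_le_sub_one_of_pos (hev i)
    _ = _ := by simp [Finset.sum_sub_distrib]

theorem PosDef.log_re_det_le_add {A B : Matrix n n ℂ} (hA : A.PosDef) (hB : B.PosDef) :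
    Real.log A.det.re ≤ Real.log B.det.re + (B⁻¹ * (A - B)).trace.re := by
  have hBu : IsUnit B.det := (isUnit_iff_isUnit_det B).mp hB.isUnit
  obtain ⟨C, hC⟩ := hB.inv.posSemidef.exists_eq_conjTranspose_mul_self
  have hCu : IsUnit C := by
    have := hB.inv.isUnit
    rw [hC] at this
    exact isUnit_of_mul_isUnit_right this
  have hM : (C * A * Cᴴ).PosDef := by
    simpa only [star_eq_conjTranspose] using (hCu.posDef_star_right_conjugate_iff).mpr hA
  have hdet : (C * A * Cᴴ).det * B.det = A.det := by
    have h1 : Cᴴ.det * C.det * B.det = 1 := by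
      rw [← det_mul, ← det_mul, ← hC, nonsing_inv_mul _ hBu, det_one]
    rw [det_mul, det_mul]
    linear_combination A.det * h1
  have htr : (B⁻¹ * (A - B)).trace = (C * A * Cᴴ).trace - Fintype.card n := by
    rw [Matrix.mul_sub, nonsing_inv_mul _ hBu, trace_sub, trace_one, hC, Matrix.mul_assoc,
      trace_mul_comm, Matrix.mul_assoc]
  rw [← hdet, Complex.log_re_mul hM.det_pos hB.det_pos, htr, Complex.sub_re, Complex.natCast_re]
  linarith [hM.log_re_det_le]

theorem PosDef.log_re_det_le_log_re_det_add {P S : Matrix n n ℂ} (hP : P.PosDef)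
    (hS : S.PosSemidef) : Real.log P.det.re ≤ Real.log (P + S).det.re := by
  have hPS := hP.add_posSemidef hS
  have h := hP.log_re_det_le_add hPS
  rw [sub_add_cancel_left, Matrix.mul_neg, trace_neg, Complex.neg_re] at h
  have h0 := (Complex.le_def.mp (hPS.inv.posSemidef.trace_mul_nonneg hS)).1
  rw [Complex.zero_re] at h0
  linarith

theorem log_re_det_one_add_mul_le {A A' Q : Matrix n n ℂ} (hA : A.PosSemidef)
    (hAA' : (A' - A).PosSemidef) (hQ : Q.PosSemidef) :
    Real.log (1 + A * Q).det.re ≤ Real.log (1 + A' * Q).det.re := by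
  obtain ⟨C, rfl⟩ := hQ.exists_eq_conjTranspose_mul_self
  simp only [← Matrix.mul_assoc A, ← Matrix.mul_assoc A', det_one_add_mul_comm _ C,
    ← Matrix.mul_assoc C]
  have hP := PosDef.one.add_posSemidef (hA.mul_mul_conjTranspose_same C)
  have h := hP.log_re_det_le_log_re_det_add (hAA'.mul_mul_conjTranspose_same C)
  rwa [add_assoc, ← Matrix.add_mul, ← Matrix.mul_add, add_sub_cancel] at h

theorem log_re_det_one_add_add_mul {T D Q : Matrix n n ℂ} (hT : T.PosSemidef)
    (hD : D.PosSemidef) (hQ : Q.PosSemidef) :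
    Real.log (1 + (T + D) * Q).det.re
      = Real.log (1 + D * (Q * (1 + T * Q)⁻¹)).det.re + Real.log (1 + T * Q).det.re := by
  rw [← one_add_mul_mul_inv_mul_one_add_mul hT hQ D, det_mul, Complex.log_re_mul
    (det_one_add_mul_pos hD (posSemidef_mul_inv_one_add_mul hT hQ)) (det_one_add_mul_pos hT hQ)]

/-- The tangent inequality of the concave map `Φ ↦ log det (1 + D * Φ)`, whose gradient at `Φ`
is `E = (1 + D * Φ)⁻¹ * D`. -/
theorem log_re_det_one_add_mul_le_add_trace {D Φ Φ' E : Matrix n n ℂ} (hD : D.PosSemidef)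
    (hΦ : Φ.PosSemidef) (hΦ' : Φ'.PosSemidef) (hE : (1 + D * Φ) * E = D) :
    Real.log (1 + D * Φ').det.re ≤ Real.log (1 + D * Φ).det.re + (E * (Φ' - Φ)).trace.re := by
  obtain ⟨B, rfl⟩ := hD.exists_eq_conjTranspose_mul_self
  have hdet (X : Matrix n n ℂ) : (1 + Bᴴ * B * X).det = (1 + B * X * Bᴴ).det := by
    rw [Matrix.mul_assoc, det_one_add_mul_comm, Matrix.mul_assoc]
  have hP := PosDef.one.add_posSemidef (hΦ.mul_mul_conjTranspose_same B)
  have hP' := PosDef.one.add_posSemidef (hΦ'.mul_mul_conjTranspose_same B)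
  have hE' : E = Bᴴ * (1 + B * Φ * Bᴴ)⁻¹ * B := by
    have hu : IsUnit (1 + Bᴴ * B * Φ).det := by
      rw [hdet]; exact isUnit_iff_ne_zero.mpr hP.det_pos.ne'
    rw [← nonsing_inv_mul_cancel_left _ E hu, hE, Matrix.mul_assoc Bᴴ B Φ,
      ← Matrix.mul_assoc _ Bᴴ B, ← mul_inv_one_add_mul (B * Φ) Bᴴ]
  have htr : ((1 + B * Φ * Bᴴ)⁻¹ * (1 + B * Φ' * Bᴴ - (1 + B * Φ * Bᴴ))).trace
      = (E * (Φ' - Φ)).trace := by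
    rw [add_sub_add_left_eq_sub, ← Matrix.sub_mul, ← Matrix.mul_sub, ← Matrix.mul_assoc,
      trace_mul_comm, hE']
    simp only [Matrix.mul_assoc]
  rw [hdet, hdet, ← htr]
  exact hP'.log_re_det_le_add hP

theorem re_trace_mul_sub_mul_le {T Q Q' : Matrix n n ℂ} (hT : T.PosSemidef)
    (hQ : Q.PosSemidef) (hQ' : Q'.PosSemidef) :
    ((1 + Q * T) * (Q' * (1 + T * Q')⁻¹ - Q * (1 + T * Q)⁻¹) * (1 + T * Q)).trace.re
      ≤ (Q' - Q).trace.re := by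
  have hu' : IsUnit (1 + T * Q').det := isUnit_iff_ne_zero.mpr (det_one_add_mul_pos hT hQ').ne'
  have hF' := one_add_mul_mul_mul_inv_one_add_mul hT hQ'
  rw [one_add_mul_mul_sub_mul_one_add_mul (one_add_mul_mul_mul_inv_one_add_mul hT hQ) hF'
    (nonsing_inv_mul_cancel_right _ _ hu'), trace_sub, Complex.sub_re, sub_le_self_iff]
  have hS := posSemidef_sub_mul_mul_of_one_add_mul_mul_eq hQ' hT hF'
  have h := (hS.conjTranspose_mul_mul_same (Q' - Q)).trace_nonneg
  rw [(hQ'.isHermitian.sub hQ.isHermitian).eq] at h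
  exact (Complex.le_def.mp h).1

theorem log_re_det_one_add_mul_le_add_smul_trace {T D Q Q' : Matrix n n ℂ} {l : ℝ}
    (hT : T.PosSemidef) (hD : D.PosSemidef) (hQ : Q.PosSemidef) (hQ' : Q'.PosSemidef)
    (hl : 0 ≤ l)
    (hE : (1 + D * (Q * (1 + T * Q)⁻¹)) * ((l : ℂ) • ((1 + T * Q) * (1 + Q * T))) = D) :
    Real.log (1 + D * (Q' * (1 + T * Q')⁻¹)).det.re
      ≤ Real.log (1 + D * (Q * (1 + T * Q)⁻¹)).det.re + l * (Q' - Q).trace.re := by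
  have h := log_re_det_one_add_mul_le_add_trace hD (posSemidef_mul_inv_one_add_mul hT hQ)
    (posSemidef_mul_inv_one_add_mul hT hQ') hE
  rw [smul_mul_assoc, trace_smul, ← trace_mul_cycle, smul_eq_mul, Complex.re_ofReal_mul] at h
  nlinarith [re_trace_mul_sub_mul_le hT hQ hQ']

end Matrix

theorem secrecyRate_eq {Nr Ne Nt : ℕ} (H : Matrix (Fin Nr) (Fin Nt) ℂ)
    (G : Matrix (Fin Ne) (Fin Nt) ℂ) (Q : Matrix (Fin Nt) (Fin Nt) ℂ) :
    secrecyRate H G Q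
      = Real.log (1 + Hᴴ * H * Q).det.re - Real.log (1 + Gᴴ * G * Q).det.re := by
  rw [secrecyRate, det_one_add_mul_comm (H * Q), det_one_add_mul_comm (G * Q),
    ← Matrix.mul_assoc, ← Matrix.mul_assoc]

theorem secrecyRate_le_log_re_det {Nr Ne Nt : ℕ} {H : Matrix (Fin Nr) (Fin Nt) ℂ}
    {G : Matrix (Fin Ne) (Fin Nt) ℂ} {D Q : Matrix (Fin Nt) (Fin Nt) ℂ} (hD : D.PosSemidef)
    (hHD : (Gᴴ * G + D - Hᴴ * H).PosSemidef) (hQ : Q.PosSemidef) :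
    secrecyRate H G Q ≤ Real.log (1 + D * (Q * (1 + Gᴴ * G * Q)⁻¹)).det.re := by
  have hsplit := log_re_det_one_add_add_mul (posSemidef_conjTranspose_mul_self G) hD hQ
  have hmono := log_re_det_one_add_mul_le (posSemidef_conjTranspose_mul_self H) hHD hQ
  rw [secrecyRate_eq]
  linarith

theorem secrecyRate_eq_log_re_det {Nr Ne Nt : ℕ} {H : Matrix (Fin Nr) (Fin Nt) ℂ}
    {G : Matrix (Fin Ne) (Fin Nt) ℂ} {D Q : Matrix (Fin Nt) (Fin Nt) ℂ} (hD : D.PosSemidef)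
    (hQ : Q.PosSemidef) (hHD : (Gᴴ * G + D) * Q = Hᴴ * H * Q) :
    secrecyRate H G Q = Real.log (1 + D * (Q * (1 + Gᴴ * G * Q)⁻¹)).det.re := by
  rw [secrecyRate_eq, ← hHD,
    log_re_det_one_add_add_mul (posSemidef_conjTranspose_mul_self G) hD hQ, add_sub_cancel_right]

namespace IsKKTPoint

variable {Nr Ne Nt : ℕ} {H : Matrix (Fin Nr) (Fin Nt) ℂ} {G : Matrix (Fin Ne) (Fin Nt) ℂ}
  {PT : ℝ} {Q Z : Matrix (Fin Nt) (Fin Nt) ℂ} {l : ℝ}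

theorem multiplier_mul_eq_zero (h : IsKKTPoint H G PT Q Z l) : Z * Q = 0 := by
  obtain ⟨-, -, -, -, hZ, hQ, hQZ⟩ := h
  simpa [hZ.isHermitian.eq, hQ.isHermitian.eq] using congrArg conjTranspose hQZ

theorem one_add_mul_mul_eq (h : IsKKTPoint H G PT Q Z l) :
    (1 + (Hᴴ * H + Z) * Q) * (Gᴴ * (1 + G * Q * Gᴴ)⁻¹ * G + (l : ℂ) • 1)
        = Hᴴ * H + Z ∧
      (Gᴴ * (1 + G * Q * Gᴴ)⁻¹ * G + (l : ℂ) • 1) * (1 + Q * (Hᴴ * H + Z))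
        = Hᴴ * H + Z := by
  have hZQ := h.multiplier_mul_eq_zero
  obtain ⟨hstat, -, -, -, -, hQ, hQZ⟩ := h
  set K := Hᴴ * (1 + H * Q * Hᴴ)⁻¹ * H
  have hM : Gᴴ * (1 + G * Q * Gᴴ)⁻¹ * G + (l : ℂ) • 1 = K + Z :=
    eq_of_sub_eq_zero (by rw [← neg_eq_zero, ← hstat]; abel)
  rw [hM]
  constructor
  · calc (1 + (Hᴴ * H + Z) * Q) * (K + Z)
        = (1 + Hᴴ * H * Q) * K + Z + Hᴴ * H * (Q * Z) + Z * Q * (K + Z) := by noncomm_ring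
      _ = Hᴴ * H + Z := by
        rw [one_add_mul_mul_conjTranspose_mul_inv_mul hQ, hQZ, hZQ]; noncomm_ring
  · calc (K + Z) * (1 + Q * (Hᴴ * H + Z))
        = K * (1 + Q * (Hᴴ * H)) + K * (Q * Z) + Z + Z * Q * (Hᴴ * H + Z) := by noncomm_ring
      _ = Hᴴ * H + Z := by
        rw [conjTranspose_mul_inv_mul_mul_one_add_mul hQ, hQZ, hZQ]; noncomm_ring

theorem posSemidef_sub (h : IsKKTPoint H G PT Q Z l) : (Hᴴ * H + Z - Gᴴ * G).PosSemidef := by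
  obtain ⟨hMl, hMr⟩ := h.one_add_mul_mul_eq
  obtain ⟨-, -, hl, -, hZ, hQ, -⟩ := h
  have hT := posSemidef_conjTranspose_mul_self G
  have hW := (posSemidef_conjTranspose_mul_self H).add hZ
  have e := one_add_mul_mul_sub_mul_one_add_mul
    (one_add_mul_mul_conjTranspose_mul_inv_mul (H := G) hQ) hMl hMr
  rw [add_sub_cancel_left, eq_sub_iff_add_eq] at e
  rw [← e]
  refine PosSemidef.add ?_ ?_
  · have hC : (1 + Gᴴ * G * Q)ᴴ = 1 + Q * (Gᴴ * G) := by
      rw [conjTranspose_add, conjTranspose_one, conjTranspose_mul, hQ.isHermitian.eq,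
        hT.isHermitian.eq]
    have := (PosSemidef.one.smul (Complex.zero_le_real.mpr hl)).mul_mul_conjTranspose_same
      (1 + Gᴴ * G * Q)
    rwa [hC] at this
  · have := (posSemidef_sub_mul_mul_of_one_add_mul_mul_eq hW hQ hMl).conjTranspose_mul_mul_same
      (Hᴴ * H + Z - Gᴴ * G)
    rwa [(hW.isHermitian.sub hT.isHermitian).eq] at this

theorem one_add_mul_mul_smul_eq (h : IsKKTPoint H G PT Q Z l) :
    (1 + (Hᴴ * H + Z - Gᴴ * G) * (Q * (1 + Gᴴ * G * Q)⁻¹))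
      * ((l : ℂ) • ((1 + Gᴴ * G * Q) * (1 + Q * (Gᴴ * G)))) = Hᴴ * H + Z - Gᴴ * G := by
  obtain ⟨hMl, -⟩ := h.one_add_mul_mul_eq
  obtain ⟨-, -, -, -, -, hQ, -⟩ := h
  rw [mul_smul_comm, ← Matrix.mul_assoc,
    one_add_mul_mul_inv_mul_one_add_mul (posSemidef_conjTranspose_mul_self G) hQ, add_sub_cancel]
  set K := Gᴴ * (1 + G * Q * Gᴴ)⁻¹ * G
  calc (l : ℂ) • ((1 + (Hᴴ * H + Z) * Q) * (1 + Q * (Gᴴ * G)))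
      = (1 + (Hᴴ * H + Z) * Q) * ((K + (l : ℂ) • 1) - K) * (1 + Q * (Gᴴ * G)) := by
        rw [add_sub_cancel_left, Matrix.mul_smul, Matrix.mul_one, Matrix.smul_mul]
    _ = (1 + (Hᴴ * H + Z) * Q) * (K + (l : ℂ) • 1) * (1 + Q * (Gᴴ * G))
        - (1 + (Hᴴ * H + Z) * Q) * (K * (1 + Q * (Gᴴ * G))) := by noncomm_ring
    _ = Hᴴ * H + Z - Gᴴ * G := by
        rw [hMl, conjTranspose_mul_inv_mul_mul_one_add_mul hQ]; noncomm_ring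

end IsKKTPoint

theorem stmt_1_general {Nr Ne Nt : ℕ}
    (H : Matrix (Fin Nr) (Fin Nt) ℂ) (G : Matrix (Fin Ne) (Fin Nt) ℂ)
    (PT : ℝ)
    (Q Z : Matrix (Fin Nt) (Fin Nt) ℂ) (l : ℝ)
    (hKKT : IsKKTPoint H G PT Q Z l) :
    ∀ Q' : Matrix (Fin Nt) (Fin Nt) ℂ, Q'.PosSemidef → (Matrix.trace Q').re ≤ PT →
      secrecyRate H G Q' ≤ secrecyRate H G Q := by
  intro Q' hQ' hQ'PT
  have hD := hKKT.posSemidef_sub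
  have hE := hKKT.one_add_mul_mul_smul_eq
  have hZQ := hKKT.multiplier_mul_eq_zero
  have hW : Gᴴ * G + (Hᴴ * H + Z - Gᴴ * G) = Hᴴ * H + Z := add_sub_cancel _ _
  obtain ⟨-, -, hl, hslack, hZ, hQ, -⟩ := hKKT
  calc secrecyRate H G Q'
      ≤ Real.log (1 + (Hᴴ * H + Z - Gᴴ * G) * (Q' * (1 + Gᴴ * G * Q')⁻¹)).det.re :=
        secrecyRate_le_log_re_det hD (by rw [hW, add_sub_cancel_left]; exact hZ) hQ'
    _ ≤ Real.log (1 + (Hᴴ * H + Z - Gᴴ * G) * (Q * (1 + Gᴴ * G * Q)⁻¹)).det.re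
          + l * (Q' - Q).trace.re :=
        log_re_det_one_add_mul_le_add_smul_trace (posSemidef_conjTranspose_mul_self G) hD hQ hQ'
          hl hE
    _ ≤ Real.log (1 + (Hᴴ * H + Z - Gᴴ * G) * (Q * (1 + Gᴴ * G * Q)⁻¹)).det.re := by
        rw [trace_sub, Complex.sub_re]
        nlinarith [mul_le_mul_of_nonneg_left hQ'PT hl]
    _ = secrecyRate H G Q :=
        (secrecyRate_eq_log_re_det hD hQ (by rw [hW, Matrix.add_mul, hZQ, add_zero])).symm

/-- If `HᴴH − GᴴG` is not negative semidefinite and `(Q, Z, λ)`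
satisfies the KKT conditions, then `Q` globally maximizes `C_s` over the feasible
set `{ Q ⪰ 0 : tr Q ≤ P_T }`. -/
theorem stmt_1 {Nr Ne Nt : ℕ}
    (H : Matrix (Fin Nr) (Fin Nt) ℂ) (G : Matrix (Fin Ne) (Fin Nt) ℂ)
    (PT : ℝ) (hPT : 0 < PT)
    (hnd : ¬ (-(Hᴴ * H - Gᴴ * G)).PosSemidef)
    (Q Z : Matrix (Fin Nt) (Fin Nt) ℂ) (l : ℝ)
    (hKKT : IsKKTPoint H G PT Q Z l) :
    ∀ Q' : Matrix (Fin Nt) (Fin Nt) ℂ, Q'.PosSemidef → (Matrix.trace Q').re ≤ PT →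
      secrecyRate H G Q' ≤ secrecyRate H G Q :=
  stmt_1_general H G PT Q Z l hKKT
end

section
/- Let H ∈ ℂ^{Nr×Nt} and G ∈ ℂ^{Ne×Nt}, let P_T > 0, and suppose H†H − G†G is NOT negative semidefinite. If (Q, Z, λ) satisfies the KKT conditions of the secrecy rate maximization problem, then λ > 0 and consequently tr(Q) = P_T. -/
open Matrix
open scoped ComplexOrder

/-- If `HᴴH − GᴴG` is not negative semidefinite and `(Q, Z, λ)`
satisfies the KKT conditions, then `λ > 0` and consequently `tr Q = P_T`. -/
theorem stmt_2 {Nr Ne Nt : ℕ}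
    (H : Matrix (Fin Nr) (Fin Nt) ℂ) (G : Matrix (Fin Ne) (Fin Nt) ℂ)
    (PT : ℝ) (hPT : 0 < PT)
    (hnd : ¬ (-(Hᴴ * H - Gᴴ * G)).PosSemidef)
    (Q Z : Matrix (Fin Nt) (Fin Nt) ℂ) (l : ℝ)
    (hKKT : IsKKTPoint H G PT Q Z l) :
    0 < l ∧ (Matrix.trace Q).re = PT := by
  obtain ⟨hst, htr, hl0, hcs, hZ, hQ, hQZ⟩ := hKKT
  -- First show `l ≠ 0`, by contradiction.
  have hlne : l ≠ 0 := by
    intro hl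
    subst hl
    apply hnd
    -- With `l = 0`, stationarity reads `Hᴴ A H − Gᴴ B G + Z = 0`.
    simp only [Complex.ofReal_zero, zero_smul, sub_zero] at hst
    set A := (1 + H * Q * Hᴴ)⁻¹ with hAdef
    set B := (1 + G * Q * Gᴴ)⁻¹ with hBdef
    have hAu : IsUnit (1 + H * Q * Hᴴ).det :=
      ((Matrix.PosDef.one).add_posSemidef (hQ.mul_mul_conjTranspose_same H)).det_pos.ne'.isUnit
    have hBu : IsUnit (1 + G * Q * Gᴴ).det :=
      ((Matrix.PosDef.one).add_posSemidef (hQ.mul_mul_conjTranspose_same G)).det_pos.ne'.isUnit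
    -- key cancellation identities
    have h1 : (1 + Hᴴ * H * Q) * Hᴴ = Hᴴ * (1 + H * Q * Hᴴ) := by
      simp only [Matrix.add_mul, Matrix.mul_add, Matrix.one_mul, Matrix.mul_one,
        Matrix.mul_assoc]
    have key1 : (1 + Hᴴ * H * Q) * (Hᴴ * A) = Hᴴ := by
      rw [← Matrix.mul_assoc, h1, Matrix.mul_assoc, hAdef,
        Matrix.mul_nonsing_inv _ hAu, Matrix.mul_one]
    have h2 : G * (1 + Q * (Gᴴ * G)) = (1 + G * Q * Gᴴ) * G := by
      simp only [Matrix.add_mul, Matrix.mul_add, Matrix.one_mul, Matrix.mul_one,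
        Matrix.mul_assoc]
    have key2 : (B * G) * (1 + Q * (Gᴴ * G)) = G := by
      rw [Matrix.mul_assoc, h2, ← Matrix.mul_assoc, hBdef,
        Matrix.nonsing_inv_mul _ hBu, Matrix.one_mul]
    -- `Z Q = 0` from `Q Z = 0` and hermiticity
    have hZQ : Z * Q = 0 := by
      calc Z * Q = Zᴴ * Qᴴ := by rw [hZ.1.eq, hQ.1.eq]
        _ = (Q * Z)ᴴ := by rw [Matrix.conjTranspose_mul]
        _ = 0 := by rw [hQZ, Matrix.conjTranspose_zero]
    -- stationarity gives `Hᴴ A H − Gᴴ B G = −Z`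
    have heq : Hᴴ * A * H - Gᴴ * B * G = -Z := eq_neg_of_add_eq_zero_left hst
    -- auxiliary cancellations
    have e1 : (1 + Hᴴ * H * Q) * (Hᴴ * A * H) = Hᴴ * H := by
      rw [← Matrix.mul_assoc, key1]
    have e2 : (Gᴴ * B * G) * (1 + Q * (Gᴴ * G)) = Gᴴ * G := by
      rw [Matrix.mul_assoc Gᴴ B G, Matrix.mul_assoc Gᴴ (B * G), key2]
    -- sandwich identity
    have hsand : (1 + Hᴴ * H * Q) * (Hᴴ * A * H - Gᴴ * B * G) * (1 + Q * (Gᴴ * G))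
        = Hᴴ * H - Gᴴ * G := by
      calc (1 + Hᴴ * H * Q) * (Hᴴ * A * H - Gᴴ * B * G) * (1 + Q * (Gᴴ * G))
          = (1 + Hᴴ * H * Q) * (Hᴴ * A * H) * (1 + Q * (Gᴴ * G))
            - (1 + Hᴴ * H * Q) * (Gᴴ * B * G) * (1 + Q * (Gᴴ * G)) := by
              rw [Matrix.mul_sub, Matrix.sub_mul]
        _ = (Hᴴ * H) * (1 + Q * (Gᴴ * G))
            - (1 + Hᴴ * H * Q) * ((Gᴴ * B * G) * (1 + Q * (Gᴴ * G))) := by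
              rw [e1, Matrix.mul_assoc (1 + Hᴴ * H * Q) (Gᴴ * B * G)]
        _ = (Hᴴ * H) * (1 + Q * (Gᴴ * G)) - (1 + Hᴴ * H * Q) * (Gᴴ * G) := by rw [e2]
        _ = Hᴴ * H - Gᴴ * G := by
              simp only [Matrix.mul_add, Matrix.add_mul, Matrix.mul_one, Matrix.one_mul,
                Matrix.mul_assoc]
              abel
    -- sandwiching `-Z` gives `-Z` since `QZ = ZQ = 0`
    have hz1 : (1 + Hᴴ * H * Q) * Z = Z := by
      rw [Matrix.add_mul, Matrix.one_mul, Matrix.mul_assoc, hQZ, Matrix.mul_zero, add_zero]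
    have hz2 : Z * (1 + Q * (Gᴴ * G)) = Z := by
      rw [Matrix.mul_add, Matrix.mul_one, ← Matrix.mul_assoc, hZQ, Matrix.zero_mul, add_zero]
    have hsandZ : (1 + Hᴴ * H * Q) * (-Z) * (1 + Q * (Gᴴ * G)) = -Z := by
      rw [Matrix.mul_neg, Matrix.neg_mul, hz1, hz2]
    have hfin : Hᴴ * H - Gᴴ * G = -Z := by rw [← hsand, heq, hsandZ]
    rw [hfin, neg_neg]
    exact hZ
  have hl : 0 < l := hl0.lt_of_ne' hlne
  refine ⟨hl, ?_⟩
  rcases mul_eq_zero.mp hcs with h | h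
  · exact absurd h hlne
  · linarith
end

section
/- Let H ∈ ℂ^{Nr×Nt}, G ∈ ℂ^{Ne×Nt}, let Q ∈ ℂ^{Nt×Nt} be Hermitian positive semidefinite and Z ∈ ℂ^{Nt×Nt} Hermitian positive semidefinite. If the stationarity equation with zero multiplier holds, i.e. H†(I + H Q H†)⁻¹H − G†(I + G Q G†)⁻¹G + Z = 0, then H†H − G†G = −(I + H†H Q) Z (I + Q G†G); in particular H†H − G†G is negative semidefinite. -/
/-!
Write `A = HᴴH` and `B = GᴴG`. By the push-through identity `(I + AQ)Hᴴ = Hᴴ(I + HQHᴴ)`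
and its analogue for `G`, multiplying the stationarity equation by `I + AQ` on the left and
by `I + QB` on the right clears both inverses and gives `B - A = (I + AQ) Z (I + QB)`.

This is not visibly a congruence of `Z`. With `M = I + QB` and `E = M⁻ᴴ (B - A) M⁻¹`, it
becomes `E = Z (I - Q Mᴴ E)` where `Q Mᴴ = Q + QBQ ⪰ 0`. That forces the Hermitian `E` to be
`⪰ 0`: if `Ev = λv` with `λ < 0`, then `w = v - λ Q Mᴴ v` satisfies `Zw = λv`, so
`wᴴZw = λ (vᴴv - λ vᴴ Q Mᴴ v) < 0`. Hence `B - A = Mᴴ E M ⪰ 0`.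
-/

open Matrix
open scoped ComplexOrder

namespace Matrix

section PushThrough

variable {l m n R : Type*} [Fintype l] [Fintype m] [Fintype n] [DecidableEq l] [DecidableEq m]
  [DecidableEq n] [CommRing R]

theorem one_add_mul_mul_mul_inv_one_add_mul_s3 (X : Matrix n m R) (Y : Matrix m n R)
    (h : IsUnit (1 + Y * X).det) : (1 + X * Y) * X * (1 + Y * X)⁻¹ = X := by
  rw [show (1 + X * Y) * X = X * (1 + Y * X) by
      simp only [Matrix.add_mul, Matrix.mul_add, Matrix.one_mul, Matrix.mul_one, Matrix.mul_assoc],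
    Matrix.mul_assoc, mul_nonsing_inv _ h, Matrix.mul_one]

theorem inv_one_add_mul_mul_mul_one_add_mul (X : Matrix n m R) (Y : Matrix m n R)
    (h : IsUnit (1 + Y * X).det) : (1 + Y * X)⁻¹ * Y * (1 + X * Y) = Y := by
  rw [Matrix.mul_assoc, show Y * (1 + X * Y) = (1 + Y * X) * Y by
      simp only [Matrix.add_mul, Matrix.mul_add, Matrix.one_mul, Matrix.mul_one, Matrix.mul_assoc],
    ← Matrix.mul_assoc, nonsing_inv_mul _ h, Matrix.one_mul]

theorem conjTranspose_mul_self_sub_eq_of_stationary [StarRing R] (H : Matrix l n R)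
    (G : Matrix m n R) (Q Z : Matrix n n R) (hH : IsUnit (1 + H * Q * Hᴴ).det)
    (hG : IsUnit (1 + G * Q * Gᴴ).det)
    (hstat : Hᴴ * (1 + H * Q * Hᴴ)⁻¹ * H - Gᴴ * (1 + G * Q * Gᴴ)⁻¹ * G + Z = 0) :
    Hᴴ * H - Gᴴ * G = -((1 + Hᴴ * H * Q) * Z * (1 + Q * (Gᴴ * G))) := by
  have pushH : (1 + Hᴴ * H * Q) * (Hᴴ * (1 + H * Q * Hᴴ)⁻¹ * H) = Hᴴ * H := by
    simpa only [← Matrix.mul_assoc] using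
      congrArg (· * H) (one_add_mul_mul_mul_inv_one_add_mul_s3 Hᴴ (H * Q) hH)
  have pushG : Gᴴ * (1 + G * Q * Gᴴ)⁻¹ * G * (1 + Q * (Gᴴ * G)) = Gᴴ * G := by
    simpa only [Matrix.mul_assoc] using congrArg (Gᴴ * ·)
      (inv_one_add_mul_mul_mul_one_add_mul (Q * Gᴴ) G (by rwa [← Matrix.mul_assoc]))
  set SH := Hᴴ * (1 + H * Q * Hᴴ)⁻¹ * H
  set SG := Gᴴ * (1 + G * Q * Gᴴ)⁻¹ * G
  set A := Hᴴ * H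
  set B := Gᴴ * G
  calc A - B = (1 + A * Q) * SH * (1 + Q * B) - (1 + A * Q) * (SG * (1 + Q * B)) := by
        rw [pushH, pushG]; noncomm_ring
    _ = (1 + A * Q) * (SH - SG) * (1 + Q * B) := by noncomm_ring
    _ = -((1 + A * Q) * Z * (1 + Q * B)) := by
        rw [eq_neg_of_add_eq_zero_left hstat]; noncomm_ring

end PushThrough

section Positivity

variable {m n 𝕜 : Type*} [Fintype m] [Fintype n] [RCLike 𝕜]

theorem posSemidef_of_eq_mul_one_sub_mul [DecidableEq n] {Z R E : Matrix n n 𝕜}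
    (hZ : Z.PosSemidef) (hR : R.PosSemidef) (hE : E.IsHermitian) (h : E = Z * (1 - R * E)) :
    E.PosSemidef := by
  rw [hE.posSemidef_iff_eigenvalues_nonneg]
  intro i
  by_contra! hneg
  set μ : 𝕜 := (hE.eigenvalues i : 𝕜)
  set v : n → 𝕜 := ⇑(hE.eigenvectorBasis i)
  have hv : E *ᵥ v = μ • v := by
    rw [hE.mulVec_eigenvectorBasis i, RCLike.real_smul_eq_coe_smul (K := 𝕜)]
  have hZw : Z *ᵥ (v - μ • R *ᵥ v) = μ • v := by
    conv_rhs => rw [← hv, h]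
    rw [← mulVec_mulVec, sub_mulVec, one_mulVec, ← mulVec_mulVec, hv, mulVec_smul]
  have hRv : star (R *ᵥ v) ⬝ᵥ v = star v ⬝ᵥ (R *ᵥ v) := by
    rw [star_mulVec, ← dotProduct_mulVec, hR.1.eq]
  have hμ : μ < 0 := RCLike.ofReal_lt_zero.mpr hneg
  have hv0 : 0 < star v ⬝ᵥ v := dotProduct_star_self_pos_iff.mpr
    (fun h0 ↦ hE.eigenvectorBasis.orthonormal.ne_zero i ((WithLp.ofLp_eq_zero 2).mp h0))
  have hquad : star (v - μ • R *ᵥ v) ⬝ᵥ (Z *ᵥ (v - μ • R *ᵥ v))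
      = μ * (star v ⬝ᵥ v + (-μ) * (star v ⬝ᵥ (R *ᵥ v))) := by
    rw [hZw, star_sub, star_smul, sub_dotProduct, dotProduct_smul, dotProduct_smul,
      smul_dotProduct, hRv]
    simp only [μ, RCLike.star_def, RCLike.conj_ofReal, smul_eq_mul]
    ring
  have hnonneg := hZ.dotProduct_mulVec_nonneg (v - μ • R *ᵥ v)
  rw [hquad] at hnonneg
  exact hnonneg.not_gt <| mul_neg_of_neg_of_pos hμ <| add_pos_of_pos_of_nonneg hv0 <|
    mul_nonneg (neg_nonneg.mpr hμ.le) (hR.dotProduct_mulVec_nonneg v)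

theorem isUnit_det_one_add_mul_mul_conjTranspose [DecidableEq m] {Q : Matrix n n 𝕜}
    (hQ : Q.PosSemidef) (H : Matrix m n 𝕜) : IsUnit (1 + H * Q * Hᴴ).det :=
  (PosDef.one.add_posSemidef (hQ.mul_mul_conjTranspose_same H)).det_pos.ne'.isUnit

theorem isUnit_det_one_add_mul_conjTranspose_mul [DecidableEq m] [DecidableEq n]
    {Q : Matrix n n 𝕜} (hQ : Q.PosSemidef) (G : Matrix m n 𝕜) :
    IsUnit (1 + Q * (Gᴴ * G)).det := by
  rw [← Matrix.mul_assoc, det_one_add_mul_comm, ← Matrix.mul_assoc]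
  exact isUnit_det_one_add_mul_mul_conjTranspose hQ G

theorem posSemidef_sub_of_eq_one_add_mul_mul_one_add_mul [DecidableEq n]
    {A B Q Z : Matrix n n 𝕜}
    (hA : A.IsHermitian) (hB : B.PosSemidef) (hQ : Q.PosSemidef) (hZ : Z.PosSemidef)
    (hM : IsUnit (1 + Q * B).det) (h : B - A = (1 + A * Q) * Z * (1 + Q * B)) :
    (B - A).PosSemidef := by
  set M := 1 + Q * B
  have hM_conj : Mᴴ = 1 + B * Q := by
    rw [conjTranspose_add, conjTranspose_one, conjTranspose_mul, hB.1.eq, hQ.1.eq]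
  have hM' : IsUnit Mᴴ.det := by rw [det_conjTranspose]; exact hM.star
  have hBA : (B - A).IsHermitian := hB.1.sub hA
  set E := Mᴴ⁻¹ * (B - A) * M⁻¹
  have hE : E.IsHermitian := by
    rw [IsHermitian, conjTranspose_mul, conjTranspose_mul, conjTranspose_nonsing_inv,
      conjTranspose_nonsing_inv, conjTranspose_conjTranspose, hBA.eq, ← Matrix.mul_assoc]
  have hBA_E : B - A = Mᴴ * E * M := by
    simp only [E, Matrix.mul_assoc, nonsing_inv_mul _ hM, Matrix.mul_one,
      mul_nonsing_inv_cancel_left _ _ hM']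
  have hBA' : B - A = Mᴴ * Z * (1 + Q * A) := by
    rw [← hBA.eq, h]
    simp only [conjTranspose_mul, conjTranspose_add, conjTranspose_one, hA.eq, hQ.1.eq, hZ.1.eq,
      Matrix.mul_assoc]
  have hR : (Q * Mᴴ).PosSemidef := by
    rw [hM_conj, Matrix.mul_add, Matrix.mul_one, ← Matrix.mul_assoc]
    simpa only [hQ.1.eq] using hQ.add (hB.conjTranspose_mul_mul_same Q)
  rw [hBA_E]
  refine (posSemidef_of_eq_mul_one_sub_mul hZ hR hE ?_).conjTranspose_mul_mul_same M
  calc E = Z * (1 + Q * A) * M⁻¹ := by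
        simp only [E, hBA', Matrix.mul_assoc, nonsing_inv_mul_cancel_left _ _ hM']
    _ = Z * (M - Q * (B - A)) * M⁻¹ := by simp only [M]; noncomm_ring
    _ = Z * (1 - Q * Mᴴ * E) := by
        rw [hBA_E, show M - Q * (Mᴴ * E * M) = (1 - Q * Mᴴ * E) * M by noncomm_ring,
          Matrix.mul_assoc, Matrix.mul_assoc, mul_nonsing_inv _ hM, Matrix.mul_one]

end Positivity

end Matrix

/-- If `Q ⪰ 0`, `Z ⪰ 0` and the stationarity equation with zero
multiplier holds, i.e. `Hᴴ(I + H Q Hᴴ)⁻¹H − Gᴴ(I + G Q Gᴴ)⁻¹G + Z = 0`, then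
`HᴴH − GᴴG = −(I + HᴴH Q) Z (I + Q GᴴG)`; in particular `HᴴH − GᴴG` is negative
semidefinite. -/
theorem stmt_3 {Nr Ne Nt : ℕ}
    (H : Matrix (Fin Nr) (Fin Nt) ℂ) (G : Matrix (Fin Ne) (Fin Nt) ℂ)
    (Q Z : Matrix (Fin Nt) (Fin Nt) ℂ)
    (hQ : Q.PosSemidef) (hZ : Z.PosSemidef)
    (hstat : Hᴴ * (1 + H * Q * Hᴴ)⁻¹ * H - Gᴴ * (1 + G * Q * Gᴴ)⁻¹ * G + Z = 0) :
    Hᴴ * H - Gᴴ * G = -((1 + Hᴴ * H * Q) * Z * (1 + Q * (Gᴴ * G)))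
      ∧ (-(Hᴴ * H - Gᴴ * G)).PosSemidef := by
  have hsub := conjTranspose_mul_self_sub_eq_of_stationary H G Q Z
    (isUnit_det_one_add_mul_mul_conjTranspose hQ H)
    (isUnit_det_one_add_mul_mul_conjTranspose hQ G) hstat
  refine ⟨hsub, ?_⟩
  rw [neg_sub]
  refine posSemidef_sub_of_eq_one_add_mul_mul_one_add_mul (isHermitian_conjTranspose_mul_self H)
    (posSemidef_conjTranspose_mul_self G) hQ hZ (isUnit_det_one_add_mul_conjTranspose_mul hQ G) ?_
  rw [← neg_sub, hsub, neg_neg]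
end

section
/- Let H ∈ ℂ^{Nr×Nt}, G ∈ ℂ^{Ne×Nt}, let Q₁, Q₂ ∈ ℂ^{Nt×Nt} be Hermitian positive semidefinite, Z₁, Z₂ ∈ ℂ^{Nt×Nt} Hermitian, and λ₁, λ₂ ∈ ℝ. Define Φᵢ = H†(I + H Qᵢ H†)⁻¹H and Ψᵢ = G†(I + G Qᵢ G†)⁻¹G. If Zᵢ + Φᵢ − Ψᵢ = λᵢ I for i = 1, 2, then (Φ₁ − Φ₂) − (Ψ₁ − Ψ₂) = Ψ₁(Q₂ − Q₁)(λ₂I − Z₂) + (λ₁I − Z₁)(Q₂ − Q₁)Ψ₂ + (λ₁I − Z₁)(Q₂ − Q₁)(λ₂I − Z₂). -/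
open Matrix
open scoped ComplexOrder

lemma key_resolvent {m n : ℕ} (H : Matrix (Fin m) (Fin n) ℂ)
    {Q₁ Q₂ : Matrix (Fin n) (Fin n) ℂ} (h₁ : Q₁.PosSemidef) (h₂ : Q₂.PosSemidef) :
    Hᴴ * (1 + H * Q₁ * Hᴴ)⁻¹ * H - Hᴴ * (1 + H * Q₂ * Hᴴ)⁻¹ * H =
      (Hᴴ * (1 + H * Q₁ * Hᴴ)⁻¹ * H) * (Q₂ - Q₁) * (Hᴴ * (1 + H * Q₂ * Hᴴ)⁻¹ * H) := by
  set A₁ := 1 + H * Q₁ * Hᴴ with hA₁def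
  set A₂ := 1 + H * Q₂ * Hᴴ with hA₂def
  have hpd₁ : A₁.PosDef := Matrix.PosDef.one.add_posSemidef (h₁.mul_mul_conjTranspose_same H)
  have hpd₂ : A₂.PosDef := Matrix.PosDef.one.add_posSemidef (h₂.mul_mul_conjTranspose_same H)
  have hi₁ : A₁⁻¹ * A₁ = 1 :=
    Matrix.nonsing_inv_mul _ ((Matrix.isUnit_iff_isUnit_det _).1 hpd₁.isUnit)
  have hi₂ : A₂ * A₂⁻¹ = 1 :=
    Matrix.mul_nonsing_inv _ ((Matrix.isUnit_iff_isUnit_det _).1 hpd₂.isUnit)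
  have e : H * (Q₂ - Q₁) * Hᴴ = A₂ - A₁ := by
    rw [hA₁def, hA₂def, Matrix.mul_sub, Matrix.sub_mul, add_sub_add_left_eq_sub]
  have main : A₁⁻¹ * (H * (Q₂ - Q₁) * Hᴴ) * A₂⁻¹ = A₁⁻¹ - A₂⁻¹ := by
    rw [e, mul_sub, sub_mul, hi₁, one_mul, mul_assoc, hi₂, mul_one]
  calc Hᴴ * A₁⁻¹ * H - Hᴴ * A₂⁻¹ * H
      = Hᴴ * (A₁⁻¹ - A₂⁻¹) * H := by rw [Matrix.mul_sub, Matrix.sub_mul]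
    _ = Hᴴ * (A₁⁻¹ * (H * (Q₂ - Q₁) * Hᴴ) * A₂⁻¹) * H := by rw [main]
    _ = (Hᴴ * A₁⁻¹ * H) * (Q₂ - Q₁) * (Hᴴ * A₂⁻¹ * H) := by
          simp only [Matrix.mul_assoc]

/-- If `Zᵢ + Φᵢ − Ψᵢ = λᵢ I` for `i = 1, 2`, where
`Φᵢ = Hᴴ(I + H Qᵢ Hᴴ)⁻¹H` and `Ψᵢ = Gᴴ(I + G Qᵢ Gᴴ)⁻¹G`, then
`(Φ₁ − Φ₂) − (Ψ₁ − Ψ₂) = Ψ₁(Q₂ − Q₁)(λ₂I − Z₂) + (λ₁I − Z₁)(Q₂ − Q₁)Ψ₂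
  + (λ₁I − Z₁)(Q₂ − Q₁)(λ₂I − Z₂)`. -/
theorem stmt_5 {Nr Ne Nt : ℕ}
    (H : Matrix (Fin Nr) (Fin Nt) ℂ) (G : Matrix (Fin Ne) (Fin Nt) ℂ)
    (Q₁ Q₂ Z₁ Z₂ : Matrix (Fin Nt) (Fin Nt) ℂ)
    (hQ₁ : Q₁.PosSemidef) (hQ₂ : Q₂.PosSemidef)
    (hZ₁ : Z₁.IsHermitian) (hZ₂ : Z₂.IsHermitian)
    (l₁ l₂ : ℝ)
    (Φ₁ Φ₂ Ψ₁ Ψ₂ : Matrix (Fin Nt) (Fin Nt) ℂ)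
    (hΦ₁ : Φ₁ = Hᴴ * (1 + H * Q₁ * Hᴴ)⁻¹ * H)
    (hΦ₂ : Φ₂ = Hᴴ * (1 + H * Q₂ * Hᴴ)⁻¹ * H)
    (hΨ₁ : Ψ₁ = Gᴴ * (1 + G * Q₁ * Gᴴ)⁻¹ * G)
    (hΨ₂ : Ψ₂ = Gᴴ * (1 + G * Q₂ * Gᴴ)⁻¹ * G)
    (h1 : Z₁ + Φ₁ - Ψ₁ = (l₁ : ℂ) • (1 : Matrix (Fin Nt) (Fin Nt) ℂ))
    (h2 : Z₂ + Φ₂ - Ψ₂ = (l₂ : ℂ) • (1 : Matrix (Fin Nt) (Fin Nt) ℂ)) :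
    (Φ₁ - Φ₂) - (Ψ₁ - Ψ₂) =
      Ψ₁ * (Q₂ - Q₁) * ((l₂ : ℂ) • (1 : Matrix (Fin Nt) (Fin Nt) ℂ) - Z₂)
      + ((l₁ : ℂ) • (1 : Matrix (Fin Nt) (Fin Nt) ℂ) - Z₁) * (Q₂ - Q₁) * Ψ₂
      + ((l₁ : ℂ) • (1 : Matrix (Fin Nt) (Fin Nt) ℂ) - Z₁) * (Q₂ - Q₁)
        * ((l₂ : ℂ) • (1 : Matrix (Fin Nt) (Fin Nt) ℂ) - Z₂) := by
  have e1 : (l₁ : ℂ) • (1 : Matrix (Fin Nt) (Fin Nt) ℂ) - Z₁ = Φ₁ - Ψ₁ := by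
    rw [← h1]; abel
  have e2 : (l₂ : ℂ) • (1 : Matrix (Fin Nt) (Fin Nt) ℂ) - Z₂ = Φ₂ - Ψ₂ := by
    rw [← h2]; abel
  have kΦ : Φ₁ - Φ₂ = Φ₁ * (Q₂ - Q₁) * Φ₂ := by
    rw [hΦ₁, hΦ₂]; exact key_resolvent H hQ₁ hQ₂
  have kΨ : Ψ₁ - Ψ₂ = Ψ₁ * (Q₂ - Q₁) * Ψ₂ := by
    rw [hΨ₁, hΨ₂]; exact key_resolvent G hQ₁ hQ₂
  rw [e1, e2, kΦ, kΨ]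
  noncomm_ring
end

section
/- Let H ∈ ℂ^{Nr×Nt} and G ∈ ℂ^{Ne×Nt}, and define for Hermitian positive semidefinite Q ∈ ℂ^{Nt×Nt} the gradient map ∇C_s(Q) = H†(I + H Q H†)⁻¹H − G†(I + G Q G†)⁻¹G. Then for all Hermitian positive semidefinite X, Y ∈ ℂ^{Nt×Nt}, ‖∇C_s(X) − ∇C_s(Y)‖_F ≤ (σ_max²(H†H) + σ_max²(G†G)) ‖X − Y‖_F, where ‖·‖_F is the Frobenius norm and σ_max(·) the largest singular value. That is, L = σ_max²(H†H) + σ_max²(G†G) is a Lipschitz constant of ∇C_s on the set of Hermitian positive semidefinite matrices. -/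
/-!
Each term of `∇C_s` has the form `P_K(Q) = Kᴴ (1 + K Q Kᴴ)⁻¹ K`. The resolvent identity
`A⁻¹ - B⁻¹ = A⁻¹ (B - A) B⁻¹` gives `P_K(X) - P_K(Y) = P_K(X) (Y - X) P_K(Y)`, and since
`1 ≤ 1 + K Q Kᴴ` in the Loewner order, `‖(1 + K Q Kᴴ)⁻¹‖ ≤ 1`, so `‖P_K(Q)‖ ≤ ‖K‖² = ‖Kᴴ K‖` in
operator norm. As the Frobenius norm of a product is at most the operator norms of the outer
factors times the Frobenius norm of the middle one, `P_K` is `‖Kᴴ K‖²`-Lipschitz, and the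
triangle inequality adds the constants for `K = H` and `K = G`.
-/

open Matrix
open scoped ComplexOrder

/-- The Frobenius norm `‖M‖_F = sqrt(tr(Mᴴ M))` of a complex matrix. -/
noncomputable def frobNorm {m n : ℕ} (M : Matrix (Fin m) (Fin n) ℂ) : ℝ :=
  Real.sqrt (Matrix.trace (Mᴴ * M)).re

/-- The largest singular value of a square complex matrix, i.e. the operator norm
of the associated continuous linear endomorphism of Euclidean space. -/
noncomputable def sigmaMax {n : ℕ} (M : Matrix (Fin n) (Fin n) ℂ) : ℝ :=
  ‖Matrix.toEuclideanCLM (𝕜 := ℂ) M‖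

/-- The gradient of the secrecy rate:
`∇C_s(Q) = Hᴴ(I + H Q Hᴴ)⁻¹H − Gᴴ(I + G Q Gᴴ)⁻¹G`. -/
noncomputable def gradCs {Nr Ne Nt : ℕ}
    (H : Matrix (Fin Nr) (Fin Nt) ℂ) (G : Matrix (Fin Ne) (Fin Nt) ℂ)
    (Q : Matrix (Fin Nt) (Fin Nt) ℂ) : Matrix (Fin Nt) (Fin Nt) ℂ :=
  Hᴴ * (1 + H * Q * Hᴴ)⁻¹ * H - Gᴴ * (1 + G * Q * Gᴴ)⁻¹ * G

open scoped Matrix.Norms.L2Operator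

section Frobenius

variable {m n p q : ℕ}

noncomputable def colsL2 (M : Matrix (Fin m) (Fin n) ℂ) :
    PiLp 2 (fun _ : Fin n => EuclideanSpace ℂ (Fin m)) :=
  WithLp.toLp 2 fun j => WithLp.toLp 2 (Mᵀ j)

lemma frobNorm_eq_norm_colsL2 (M : Matrix (Fin m) (Fin n) ℂ) : frobNorm M = ‖colsL2 M‖ := by
  rw [frobNorm, PiLp.norm_eq_of_L2]
  congr 1
  simp [trace, mul_apply, colsL2, EuclideanSpace.norm_sq_eq, Complex.re_sum,
    ← Complex.normSq_eq_norm_sq, Complex.normSq_apply]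

lemma frobNorm_nonneg (M : Matrix (Fin m) (Fin n) ℂ) : 0 ≤ frobNorm M :=
  Real.sqrt_nonneg _

lemma colsL2_sub (A B : Matrix (Fin m) (Fin n) ℂ) : colsL2 (A - B) = colsL2 A - colsL2 B := rfl

lemma frobNorm_sub_le (A B : Matrix (Fin m) (Fin n) ℂ) :
    frobNorm (A - B) ≤ frobNorm A + frobNorm B := by
  simpa only [frobNorm_eq_norm_colsL2, colsL2_sub] using norm_sub_le (colsL2 A) (colsL2 B)

lemma frobNorm_sub_rev (A B : Matrix (Fin m) (Fin n) ℂ) :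
    frobNorm (A - B) = frobNorm (B - A) := by
  simpa only [frobNorm_eq_norm_colsL2, colsL2_sub] using norm_sub_rev (colsL2 A) (colsL2 B)

lemma frobNorm_conjTranspose (M : Matrix (Fin m) (Fin n) ℂ) : frobNorm Mᴴ = frobNorm M := by
  rw [frobNorm, frobNorm, conjTranspose_conjTranspose, trace_mul_comm]

lemma frobNorm_mul_le_l2_opNorm_mul (A : Matrix (Fin m) (Fin n) ℂ)
    (M : Matrix (Fin n) (Fin p) ℂ) : frobNorm (A * M) ≤ ‖A‖ * frobNorm M := by
  simp only [frobNorm_eq_norm_colsL2]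
  refine le_of_sq_le_sq ?_ (by positivity)
  rw [mul_pow, PiLp.norm_sq_eq_of_L2, PiLp.norm_sq_eq_of_L2, Finset.mul_sum]
  refine Finset.sum_le_sum fun j _ => ?_
  rw [← mul_pow]
  exact pow_le_pow_left₀ (norm_nonneg _) (l2_opNorm_mulVec A (colsL2 M j)) 2

lemma frobNorm_mul_le_mul_l2_opNorm (M : Matrix (Fin m) (Fin n) ℂ)
    (B : Matrix (Fin n) (Fin p) ℂ) : frobNorm (M * B) ≤ frobNorm M * ‖B‖ := by
  rw [← frobNorm_conjTranspose, conjTranspose_mul, ← frobNorm_conjTranspose M, mul_comm,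
    ← l2_opNorm_conjTranspose B]
  exact frobNorm_mul_le_l2_opNorm_mul Bᴴ Mᴴ

lemma frobNorm_mul_mul_le (A : Matrix (Fin m) (Fin n) ℂ) (M : Matrix (Fin n) (Fin p) ℂ)
    (B : Matrix (Fin p) (Fin q) ℂ) : frobNorm (A * M * B) ≤ ‖A‖ * frobNorm M * ‖B‖ :=
  (frobNorm_mul_le_mul_l2_opNorm _ B).trans <|
    mul_le_mul_of_nonneg_right (frobNorm_mul_le_l2_opNorm_mul A M) (norm_nonneg B)

end Frobenius

open scoped MatrixOrder in
lemma norm_inv_one_add_le_one {n : Type*} [Fintype n] [DecidableEq n] {S : Matrix n n ℂ}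
    (hS : S.PosSemidef) : ‖(1 + S)⁻¹‖ ≤ 1 := by
  have h1 : (1 : Matrix n n ℂ) ≤ 1 + S := le_add_of_nonneg_right hS.nonneg
  generalize 1 + S = A at h1 ⊢
  lift A to (Matrix n n ℂ)ˣ using CStarAlgebra.isUnit_of_le 1 h1
  have hA : (0 : Matrix n n ℂ) ≤ ↑A⁻¹ := CFC.inv_nonneg_of_nonneg A (zero_le_one.trans h1)
  rw [← coe_units_inv, CStarAlgebra.norm_le_one_iff_of_nonneg _ hA]
  exact CStarAlgebra.inv_le_one h1

section LogDetGrad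

variable {m n : Type*} [Fintype m] [DecidableEq m] [Fintype n]

/-- The gradient of `Q ↦ log det (1 + K Q Kᴴ)`. -/
noncomputable def logDetGrad (K : Matrix m n ℂ) (Q : Matrix n n ℂ) : Matrix n n ℂ :=
  Kᴴ * (1 + K * Q * Kᴴ)⁻¹ * K

lemma norm_logDetGrad_le [DecidableEq n] (K : Matrix m n ℂ) {Q : Matrix n n ℂ}
    (hQ : Q.PosSemidef) :
    ‖logDetGrad K Q‖ ≤ ‖Kᴴ * K‖ :=
  calc ‖logDetGrad K Q‖ ≤ ‖Kᴴ‖ * ‖(1 + K * Q * Kᴴ)⁻¹‖ * ‖K‖ :=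
        (l2_opNorm_mul _ _).trans <|
          mul_le_mul_of_nonneg_right (l2_opNorm_mul _ _) (norm_nonneg K)
    _ ≤ ‖Kᴴ‖ * 1 * ‖K‖ := by
        gcongr
        exact norm_inv_one_add_le_one (hQ.mul_mul_conjTranspose_same K)
    _ = ‖Kᴴ * K‖ := by rw [mul_one, l2_opNorm_conjTranspose, l2_opNorm_conjTranspose_mul_self]

lemma logDetGrad_sub_logDetGrad (K : Matrix m n ℂ) {X Y : Matrix n n ℂ}
    (hX : X.PosSemidef) (hY : Y.PosSemidef) :
    logDetGrad K X - logDetGrad K Y = logDetGrad K X * (Y - X) * logDetGrad K Y := by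
  have hunit {Q : Matrix n n ℂ} (hQ : Q.PosSemidef) : IsUnit (1 + K * Q * Kᴴ) :=
    (PosDef.one.add_posSemidef (hQ.mul_mul_conjTranspose_same K)).isUnit
  calc logDetGrad K X - logDetGrad K Y
      = Kᴴ * ((1 + K * X * Kᴴ)⁻¹ - (1 + K * Y * Kᴴ)⁻¹) * K := by
        simp only [logDetGrad, Matrix.mul_sub, Matrix.sub_mul]
    _ = Kᴴ * ((1 + K * X * Kᴴ)⁻¹ * (K * (Y - X) * Kᴴ) * (1 + K * Y * Kᴴ)⁻¹) * K := by
        rw [inv_sub_inv (iff_of_true (hunit hX) (hunit hY)), add_sub_add_left_eq_sub,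
          ← Matrix.sub_mul, ← Matrix.mul_sub]
    _ = logDetGrad K X * (Y - X) * logDetGrad K Y := by
        simp only [logDetGrad, Matrix.mul_assoc]

end LogDetGrad

lemma frobNorm_logDetGrad_sub_le {a b : ℕ} (K : Matrix (Fin a) (Fin b) ℂ)
    {X Y : Matrix (Fin b) (Fin b) ℂ} (hX : X.PosSemidef) (hY : Y.PosSemidef) :
    frobNorm (logDetGrad K X - logDetGrad K Y) ≤ sigmaMax (Kᴴ * K) ^ 2 * frobNorm (X - Y) :=
  calc frobNorm (logDetGrad K X - logDetGrad K Y)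
      ≤ ‖logDetGrad K X‖ * frobNorm (Y - X) * ‖logDetGrad K Y‖ := by
        rw [logDetGrad_sub_logDetGrad K hX hY]
        exact frobNorm_mul_mul_le _ _ _
    _ ≤ ‖Kᴴ * K‖ * frobNorm (Y - X) * ‖Kᴴ * K‖ := by
        have := frobNorm_nonneg (Y - X)
        gcongr
        exacts [norm_logDetGrad_le K hX, norm_logDetGrad_le K hY]
    _ = sigmaMax (Kᴴ * K) ^ 2 * frobNorm (X - Y) := by
        rw [frobNorm_sub_rev, sigmaMax, ← cstar_norm_def]; ring

/-- `L = σ_max²(HᴴH) + σ_max²(GᴴG)` is a Lipschitz constant of the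
gradient map `∇C_s` (in Frobenius norm) on the set of Hermitian positive
semidefinite matrices. -/
theorem stmt_10 {Nr Ne Nt : ℕ}
    (H : Matrix (Fin Nr) (Fin Nt) ℂ) (G : Matrix (Fin Ne) (Fin Nt) ℂ) :
    ∀ X Y : Matrix (Fin Nt) (Fin Nt) ℂ, X.PosSemidef → Y.PosSemidef →
      frobNorm (gradCs H G X - gradCs H G Y)
        ≤ (sigmaMax (Hᴴ * H) ^ 2 + sigmaMax (Gᴴ * G) ^ 2) * frobNorm (X - Y) := by
  intro X Y hX hY
  have hsplit : gradCs H G X - gradCs H G Y =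
      (logDetGrad H X - logDetGrad H Y) - (logDetGrad G X - logDetGrad G Y) := by
    simp only [gradCs, logDetGrad]; abel
  rw [hsplit, add_mul]
  exact (frobNorm_sub_le _ _).trans <|
    add_le_add (frobNorm_logDetGrad_sub_le H hX hY) (frobNorm_logDetGrad_sub_le G hX hY)
end
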